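/- arXiv:0710.3864 — 2 statements merged into one kernel-verified Lean document; each statement's English description precedes it below -/
import Mathlib

section
/- Let R = ℂ[x₁, …, xₙ] with n ≥ 2. Let L be the Lie algebra of derivations of R generated by all derivations of the form f·∂ᵢ and xᵢ·f·∂ᵢ, where 1 ≤ i ≤ n and f ∈ R satisfies ∂ᵢ(f) = 0. Then L contains every derivation of the form g·∂ⱼ for arbitrary g ∈ R and 1 ≤ j ≤ n; consequently L equals the Lie algebra of all ℂ-derivations of R. -/
/-! For `i ≠ j` and `∂ᵢa = 0` the bracket `⁅a∂ᵢ, xᵢ∂ⱼ⁆ = a∂ⱼ - xᵢ(∂ⱼa)∂ᵢ` writes `a∂ⱼ` in terms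
of generators, because `∂ᵢ∂ⱼa = ∂ⱼ∂ᵢa = 0` makes `xᵢ(∂ⱼa)∂ᵢ` an overshear. Bracketing further with
a shear `b∂ⱼ` gives `⁅a∂ⱼ, b∂ⱼ⁆ = -b(∂ⱼa)∂ⱼ`; with `a = xⱼ^(k+1)` and `b` a monomial free of `xⱼ`
this yields `(k+1)·b·xⱼ^k·∂ⱼ`, so in characteristic zero every monomial times `∂ⱼ` lies in the Lie
algebra. Finally every derivation is `∑ⱼ D(xⱼ)∂ⱼ`. -/

open MvPolynomial

/-- The partial derivative `∂/∂xᵢ` as a `ℂ`-derivation of `ℂ[x₁,…,xₙ]`. -/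
noncomputable def pd {n : ℕ} (i : Fin n) :
    Derivation ℂ (MvPolynomial (Fin n) ℂ) (MvPolynomial (Fin n) ℂ) :=
  pderiv i

theorem Derivation.lie_smul_smul {R A : Type*} [CommRing R] [CommRing A] [Algebra R A]
    (D E : Derivation R A A) (a b : A) :
    ⁅a • D, b • E⁆ = (a * D b) • E - (b * E a) • D + (a * b) • ⁅D, E⁆ := by
  ext x
  simp only [Derivation.commutator_apply, Derivation.add_apply, Derivation.sub_apply,
    Derivation.smul_apply, smul_eq_mul, Derivation.leibniz]
  ring

namespace MvPolynomial

variable {σ R : Type*} [CommRing R]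

theorem lie_pderiv_pderiv (i j : σ) :
    ⁅pderiv (R := R) (σ := σ) i, pderiv (R := R) j⁆ = 0 := by
  classical
  refine derivation_ext fun k => ?_
  simp [Derivation.commutator_apply, pderiv_X, Pi.single_apply, apply_ite]

theorem pderiv_pderiv_comm (i j : σ) (p : MvPolynomial σ R) :
    pderiv i (pderiv j p) = pderiv j (pderiv i p) := by
  rw [← sub_eq_zero, ← Derivation.commutator_apply, lie_pderiv_pderiv, Derivation.zero_apply]

theorem lie_smul_pderiv_smul_pderiv (i j : σ) (a b : MvPolynomial σ R) :
    ⁅a • pderiv (R := R) i, b • pderiv (R := R) j⁆ =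
      (a * pderiv i b) • pderiv j - (b * pderiv j a) • pderiv i := by
  rw [Derivation.lie_smul_smul, lie_pderiv_pderiv, smul_zero, add_zero]

theorem eq_sum_smul_pderiv [Fintype σ] (D : Derivation R (MvPolynomial σ R) (MvPolynomial σ R)) :
    D = ∑ j, D (X j) • pderiv j := by
  classical
  refine derivation_ext fun k => ?_
  conv_rhs => rw [← Derivation.coeFnAddMonoidHom_apply, map_sum, Finset.sum_apply]
  simp [Derivation.coeFnAddMonoidHom_apply, pderiv_X, Pi.single_apply]

variable (σ R) in
def shearDerivations : Set (Derivation R (MvPolynomial σ R) (MvPolynomial σ R)) :=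
  {D | ∃ (i : σ) (f : MvPolynomial σ R), pderiv i f = 0 ∧
    (D = f • pderiv i ∨ D = (X i * f) • pderiv i)}

variable (σ R) in
noncomputable def shearLieSubalgebra :
    LieSubalgebra R (Derivation R (MvPolynomial σ R) (MvPolynomial σ R)) :=
  LieSubalgebra.lieSpan R _ (shearDerivations σ R)

theorem smul_pderiv_mem_shearLieSubalgebra_of_pderiv_eq_zero {i j : σ} (hij : i ≠ j)
    {a : MvPolynomial σ R} (ha : pderiv i a = 0) :
    a • pderiv j ∈ shearLieSubalgebra σ R := by
  have h := lie_smul_pderiv_smul_pderiv i j a (X i)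
  rw [pderiv_X_self, mul_one, eq_sub_iff_add_eq] at h
  rw [← h]
  refine add_mem (LieSubalgebra.lie_mem _ ?_ ?_) ?_
  · exact LieSubalgebra.subset_lieSpan ⟨i, a, ha, .inl rfl⟩
  · exact LieSubalgebra.subset_lieSpan ⟨j, X i, pderiv_X_of_ne hij, .inl rfl⟩
  · exact LieSubalgebra.subset_lieSpan
      ⟨i, pderiv j a, by rw [pderiv_pderiv_comm, ha, map_zero], .inr rfl⟩

theorem mul_pderiv_smul_pderiv_mem_shearLieSubalgebra {i j : σ} (hij : i ≠ j)
    {a b : MvPolynomial σ R} (ha : pderiv i a = 0) (hb : pderiv j b = 0) :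
    (b * pderiv j a) • pderiv j ∈ shearLieSubalgebra σ R := by
  have h := lie_smul_pderiv_smul_pderiv j j a b
  rw [hb, mul_zero, zero_smul, zero_sub] at h
  rw [neg_eq_iff_eq_neg.mp h.symm]
  exact neg_mem <| LieSubalgebra.lie_mem _
    (smul_pderiv_mem_shearLieSubalgebra_of_pderiv_eq_zero hij ha)
    (LieSubalgebra.subset_lieSpan ⟨j, b, hb, .inl rfl⟩)

section CharZero

variable {K : Type*} [Field K] [CharZero K]

theorem monomial_smul_pderiv_mem_shearLieSubalgebra {i j : σ} (hij : i ≠ j) (s : σ →₀ ℕ)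
    (c : K) :
    monomial s c • pderiv j ∈ shearLieSubalgebra σ K := by
  set b : MvPolynomial σ K := monomial (s.erase j) ((s j + 1 : K)⁻¹ * c)
  have hb : pderiv j b = 0 := by simp [b, pderiv_monomial]
  have ha : pderiv i (X j ^ (s j + 1) : MvPolynomial σ K) = 0 := by
    simp [pderiv_X_of_ne hij.symm]
  have h : monomial s c = b * pderiv j (X j ^ (s j + 1)) := by
    rw [pderiv_pow, pderiv_X_self, mul_one, add_tsub_cancel_right, X_pow_eq_monomial,
      ← C_eq_coe_nat, C_mul_monomial, monomial_mul, Finsupp.erase_add_single]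
    push_cast
    field_simp
  rw [h]
  exact mul_pderiv_smul_pderiv_mem_shearLieSubalgebra hij ha hb

theorem smul_pderiv_mem_shearLieSubalgebra [Nontrivial σ] (g : MvPolynomial σ K) (j : σ) :
    g • pderiv j ∈ shearLieSubalgebra σ K := by
  obtain ⟨i, hij⟩ := exists_ne j
  rw [g.as_sum, Finset.sum_smul]
  exact sum_mem fun s _ => monomial_smul_pderiv_mem_shearLieSubalgebra hij s _

theorem shearLieSubalgebra_eq_top [Fintype σ] [Nontrivial σ] : shearLieSubalgebra σ K = ⊤ :=
  eq_top_iff.2 fun D _ =>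
    (eq_sum_smul_pderiv D).symm ▸ sum_mem fun j _ => smul_pderiv_mem_shearLieSubalgebra _ j

end CharZero

end MvPolynomial

theorem stmt12 (n : ℕ) (hn : 2 ≤ n) :
    (∀ (g : MvPolynomial (Fin n) ℂ) (j : Fin n),
      g • pd j ∈ LieSubalgebra.lieSpan ℂ
        (Derivation ℂ (MvPolynomial (Fin n) ℂ) (MvPolynomial (Fin n) ℂ))
        {D | ∃ (i : Fin n) (f : MvPolynomial (Fin n) ℂ), pd i f = 0 ∧
          (D = f • pd i ∨ D = (X i * f) • pd i)}) ∧
    LieSubalgebra.lieSpan ℂ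
        (Derivation ℂ (MvPolynomial (Fin n) ℂ) (MvPolynomial (Fin n) ℂ))
        {D | ∃ (i : Fin n) (f : MvPolynomial (Fin n) ℂ), pd i f = 0 ∧
          (D = f • pd i ∨ D = (X i * f) • pd i)} = ⊤ := by
  have : Nontrivial (Fin n) := Fin.nontrivial_iff_two_le.2 hn
  exact ⟨smul_pderiv_mem_shearLieSubalgebra, shearLieSubalgebra_eq_top⟩
end

section
/- Let B be a commutative domain, A ⊆ B a subring that is a domain integrally closed in its fraction field K, and let G be a group acting on B by ring automorphisms that map A onto A. Let b ∈ B be fixed by every element of G and integral over A. Then the coefficients of the minimal polynomial of b over K lie in the subring A^G of G-invariant elements of A. -/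
open Polynomial

/-- The twisted polynomial is monic of the same degree and still kills `x`; over an integrally
closed base this characterizes `minpoly R x`. -/
theorem minpoly_map_eq_self_of_fixed {R S : Type*} [CommRing R] [IsDomain R]
    [IsIntegrallyClosed R] [CommRing S] [IsDomain S] [Algebra R S] [Module.IsTorsionFree R S]
    (e : R →+* R) (σ : S →+* S) (hσ : σ.comp (algebraMap R S) = (algebraMap R S).comp e)
    {x : S} (hx : IsIntegral R x) (hσx : σ x = x) :
    (minpoly R x).map e = minpoly R x := by
  have hroot : aeval x ((minpoly R x).map e) = 0 :=
    calc aeval x ((minpoly R x).map e)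
        = (minpoly R x).eval₂ (σ.comp (algebraMap R S)) (σ x) := by
          rw [aeval_def, eval₂_map, hσ, hσx]
      _ = σ (aeval x (minpoly R x)) := (hom_eval₂ _ _ _ _).symm
      _ = 0 := by rw [minpoly.aeval, map_zero]
  refine minpoly.IsIntegrallyClosed.unique_of_degree_le_degree_minpoly
    ((minpoly.monic hx).map e) hroot ?_
  rw [(minpoly.monic hx).degree_map]

theorem stmt13 {B : Type*} [CommRing B] [IsDomain B]
    (A : Subring B) [IsIntegrallyClosed A]
    (G : Type*) [Group G] [MulSemiringAction G B]
    (hGA : ∀ g : G, (fun x => g • x) '' (A : Set B) = (A : Set B))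
    (b : B) (hb : ∀ g : G, g • b = b) (hint : IsIntegral A b) :
    ∀ (i : ℕ) (g : G), g • (((minpoly A b).coeff i : A) : B)
      = (((minpoly A b).coeff i : A) : B) := by
  intro i g
  let σ : B →+* B := MulSemiringAction.toRingHom G B g
  have hσA : ∀ a ∈ A, σ a ∈ A := fun a ha => (hGA g).subset ⟨a, ha, rfl⟩
  have hmap := minpoly_map_eq_self_of_fixed (σ.restrict A A hσA) σ rfl hint (hb g)
  exact congrArg Subtype.val (by simpa using congrArg (coeff · i) hmap)
end
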